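/- For $a, b \in [0,1)$, the Maslov cocycle value $\tau'_1(a,b) = -\mathrm{sign}(\sin 2\pi a \sin 2\pi b \sin 2\pi(a+b))$ equals $2(((2a)) + ((2b)) - ((2a+2b)))$, and the Meyer cocycle value $\tau_1(a,b) = -2\,\mathrm{sign}(\sin\pi a \sin\pi b \sin\pi(a+b))$ equals $4(((a)) + ((b)) - ((a+b)))$, where $((x))$ is the Dedekind function. -/
import Mathlib


open Real

open Classical in
/-- The Dedekind function `((x))`: `{x} - 1/2` for `x ∉ ℤ` and `0` for `x ∈ ℤ`. -/
noncomputable def dedekind (x : ℝ) : ℝ :=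
  if ∃ n : ℤ, x = (n : ℝ) then 0 else Int.fract x - 1 / 2

lemma ded_of_int {x : ℝ} (h : ∃ n : ℤ, x = (n : ℝ)) : dedekind x = 0 := by
  simp [dedekind, h]

lemma ded_of_not_int {x : ℝ} (h : ¬∃ n : ℤ, x = (n : ℝ)) :
    dedekind x = Int.fract x - 1 / 2 := by
  simp [dedekind, h]

lemma fract_mem {x : ℝ} (h : ¬∃ n : ℤ, x = (n : ℝ)) : 0 < Int.fract x ∧ Int.fract x < 1 := by
  refine ⟨?_, Int.fract_lt_one x⟩
  rcases lt_or_eq_of_le (Int.fract_nonneg x) with h' | h'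
  · exact h'
  · exact absurd ⟨⌊x⌋, by have := Int.fract_add_floor x; linarith [Int.fract_add_floor x,
      h'.symm]⟩ h

lemma ded_add_int (x : ℝ) (n : ℤ) : dedekind (x + n) = dedekind x := by
  by_cases h : ∃ m : ℤ, x = (m : ℝ)
  · obtain ⟨m, rfl⟩ := h
    rw [ded_of_int ⟨m, rfl⟩, ded_of_int ⟨m + n, by push_cast; ring⟩]
  · have h2 : ¬∃ m : ℤ, x + n = (m : ℝ) := by
      rintro ⟨m, hm⟩; exact h ⟨m - n, by push_cast; linarith⟩
    rw [ded_of_not_int h, ded_of_not_int h2, Int.fract_add_intCast]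

lemma sin_pi_fract (x : ℝ) :
    Real.sin (π * x) = (-1) ^ ⌊x⌋ * Real.sin (π * Int.fract x) := by
  have : π * x = π * Int.fract x + ⌊x⌋ * π := by
    rw [Int.fract]; ring
  rw [this, Real.sin_add_int_mul_pi]

lemma key (x y : ℝ) :
    -Real.sign (Real.sin (π * x) * Real.sin (π * y) * Real.sin (π * (x + y)))
      = 2 * (dedekind x + dedekind y - dedekind (x + y)) := by
  by_cases hx : ∃ n : ℤ, x = (n : ℝ)
  · obtain ⟨n, rfl⟩ := hx
    rw [show (π : ℝ) * n = n * π by ring, Real.sin_int_mul_pi]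
    rw [ded_of_int ⟨n, rfl⟩, show ((n : ℝ) + y) = y + n by ring, ded_add_int]
    simp [Real.sign_zero]
  by_cases hy : ∃ n : ℤ, y = (n : ℝ)
  · obtain ⟨n, rfl⟩ := hy
    rw [show (π : ℝ) * n = n * π by ring, Real.sin_int_mul_pi]
    rw [ded_of_int ⟨n, rfl⟩, ded_add_int]
    simp [Real.sign_zero]
  obtain ⟨hx0, hx1⟩ := fract_mem hx
  obtain ⟨hy0, hy1⟩ := fract_mem hy
  have hsx : 0 < Real.sin (π * Int.fract x) :=
    Real.sin_pos_of_pos_of_lt_pi (by positivity) (by nlinarith [Real.pi_pos])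
  have hsy : 0 < Real.sin (π * Int.fract y) :=
    Real.sin_pos_of_pos_of_lt_pi (by positivity) (by nlinarith [Real.pi_pos])
  have hxy : x + y = (Int.fract x + Int.fract y) + ((⌊x⌋ + ⌊y⌋ : ℤ) : ℝ) := by
    push_cast
    rw [Int.fract, Int.fract]; ring
  push_cast at hxy
  by_cases hs : ∃ n : ℤ, x + y = (n : ℝ)
  · obtain ⟨n, hn⟩ := hs
    have he : Int.fract x + Int.fract y = ((n - ⌊x⌋ - ⌊y⌋ : ℤ) : ℝ) := by
      push_cast; linarith
    have h01 : (0:ℤ) < n - ⌊x⌋ - ⌊y⌋ := by exact_mod_cast (by linarith : (0:ℝ) < ((n - ⌊x⌋ - ⌊y⌋ : ℤ) : ℝ))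
    have h02 : (n - ⌊x⌋ - ⌊y⌋ : ℤ) < 2 := by exact_mod_cast (by linarith : ((n - ⌊x⌋ - ⌊y⌋ : ℤ) : ℝ) < 2)
    have hm : n - ⌊x⌋ - ⌊y⌋ = 1 := by omega
    have h1 : Int.fract x + Int.fract y = 1 := by rw [he, hm]; norm_num
    rw [hn, show (π : ℝ) * n = n * π by ring, Real.sin_int_mul_pi, mul_zero, Real.sign_zero,
        ded_of_int ⟨n, rfl⟩, ded_of_not_int hx, ded_of_not_int hy]
    linarith
  have hfs := fract_mem hs
  rw [ded_of_not_int hx, ded_of_not_int hy, ded_of_not_int hs]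
  have hxy2 : x + y = (Int.fract x + Int.fract y) + ((⌊x⌋ + ⌊y⌋ : ℤ) : ℝ) := by
    push_cast; linarith
  have hfract : Int.fract (x + y) = Int.fract (Int.fract x + Int.fract y) := by
    rw [hxy2, Int.fract_add_intCast]
  have hne1 : Int.fract x + Int.fract y ≠ 1 := by
    intro h
    apply hs
    exact ⟨⌊x⌋ + ⌊y⌋ + 1, by push_cast; linarith⟩
  rcases lt_or_gt_of_ne hne1 with hlt | hgt
  · -- no carry
    have hf : Int.fract (x + y) = Int.fract x + Int.fract y := by
      rw [hfract, Int.fract_eq_self.2 ⟨by linarith, hlt⟩]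
    have hfl : ⌊x + y⌋ = ⌊x⌋ + ⌊y⌋ := by
      rw [hxy2, Int.floor_add_intCast, Int.floor_eq_zero_iff.2 ⟨by linarith, hlt⟩, zero_add]
    have hsz : 0 < Real.sin (π * Int.fract (x + y)) := by
      rw [hf]
      exact Real.sin_pos_of_pos_of_lt_pi (by positivity) (by nlinarith [Real.pi_pos])
    have hprod : Real.sin (π * x) * Real.sin (π * y) * Real.sin (π * (x + y))
        = (-1 : ℝ) ^ (⌊x⌋ + ⌊y⌋ + ⌊x + y⌋) *
          (Real.sin (π * Int.fract x) * Real.sin (π * Int.fract y) *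
            Real.sin (π * Int.fract (x + y))) := by
      rw [sin_pi_fract x, sin_pi_fract y, sin_pi_fract (x + y), zpow_add₀ (by norm_num : (-1:ℝ) ≠ 0), zpow_add₀ (by norm_num : (-1:ℝ) ≠ 0)]
      ring
    rw [hprod, hfl, show ⌊x⌋ + ⌊y⌋ + (⌊x⌋ + ⌊y⌋) = 2 * (⌊x⌋ + ⌊y⌋) by ring]
    have hpow : ((-1 : ℝ)) ^ (2 * (⌊x⌋ + ⌊y⌋)) = 1 := by
      rw [zpow_mul]; norm_num
    rw [hpow, one_mul, Real.sign_of_pos (by positivity), hf]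
    ring
  · -- carry
    have hmem : Int.fract x + Int.fract y - 1 ∈ Set.Ico (0:ℝ) 1 := ⟨by linarith, by linarith⟩
    have hfl2 : ⌊Int.fract x + Int.fract y⌋ = 1 := by
      rw [Int.floor_eq_iff]
      constructor <;> push_cast <;> linarith
    have hf : Int.fract (x + y) = Int.fract x + Int.fract y - 1 := by
      rw [hfract, Int.fract, hfl2]; norm_num
    have hfl : ⌊x + y⌋ = ⌊x⌋ + ⌊y⌋ + 1 := by
      rw [hxy2, Int.floor_add_intCast, hfl2]; omega
    have hz0 : 0 < Int.fract (x + y) := by rw [hf]; linarith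
    have hz1 : Int.fract (x + y) < 1 := by rw [hf]; linarith
    have hsz : 0 < Real.sin (π * Int.fract (x + y)) :=
      Real.sin_pos_of_pos_of_lt_pi (by positivity) (by nlinarith [Real.pi_pos])
    have hprod : Real.sin (π * x) * Real.sin (π * y) * Real.sin (π * (x + y))
        = (-1 : ℝ) ^ (⌊x⌋ + ⌊y⌋ + ⌊x + y⌋) *
          (Real.sin (π * Int.fract x) * Real.sin (π * Int.fract y) *
            Real.sin (π * Int.fract (x + y))) := by
      rw [sin_pi_fract x, sin_pi_fract y, sin_pi_fract (x + y), zpow_add₀ (by norm_num : (-1:ℝ) ≠ 0), zpow_add₀ (by norm_num : (-1:ℝ) ≠ 0)]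
      ring
    rw [hprod, hfl, show ⌊x⌋ + ⌊y⌋ + (⌊x⌋ + ⌊y⌋ + 1) = 2 * (⌊x⌋ + ⌊y⌋) + 1 by ring]
    have hpow : ((-1 : ℝ)) ^ (2 * (⌊x⌋ + ⌊y⌋) + 1) = -1 := by
      rw [zpow_add₀ (by norm_num : (-1:ℝ) ≠ 0), zpow_mul]; norm_num
    rw [hpow]
    have hneg : (-1 : ℝ) * (Real.sin (π * Int.fract x) * Real.sin (π * Int.fract y) *
        Real.sin (π * Int.fract (x + y))) < 0 := by
      have hP : 0 < Real.sin (π * Int.fract x) * Real.sin (π * Int.fract y) *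
          Real.sin (π * Int.fract (x + y)) := by positivity
      linarith
    rw [Real.sign_of_neg hneg, hf]
    ring


/-- For `a, b ∈ [0,1)`: the Maslov cocycle
`τ'₁(a,b) = -sign(sin 2πa sin 2πb sin 2π(a+b))` equals
`2(((2a)) + ((2b)) - ((2a+2b)))`, and the Meyer cocycle
`τ₁(a,b) = -2 sign(sin πa sin πb sin π(a+b))` equals
`4(((a)) + ((b)) - ((a+b)))`. -/
theorem maslov_meyer_dedekind (a b : ℝ)
    (ha : a ∈ Set.Ico (0 : ℝ) 1) (hb : b ∈ Set.Ico (0 : ℝ) 1) :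
    (-Real.sign (Real.sin (2 * π * a) * Real.sin (2 * π * b) *
        Real.sin (2 * π * (a + b)))
      = 2 * (dedekind (2 * a) + dedekind (2 * b) - dedekind (2 * a + 2 * b))) ∧
    (-2 * Real.sign (Real.sin (π * a) * Real.sin (π * b) * Real.sin (π * (a + b)))
      = 4 * (dedekind a + dedekind b - dedekind (a + b))) := by
  constructor
  · have h := key (2 * a) (2 * b)
    rw [show (2:ℝ) * π * a = π * (2 * a) by ring, show (2:ℝ) * π * b = π * (2 * b) by ring,
        show (2:ℝ) * π * (a + b) = π * (2 * a + 2 * b) by ring]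
    exact h
  · have h := key a b
    linarith
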